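/- Let ψ: [0,∞) → ℝ be continuous and bounded, with ‖ψ‖ = sup_{t≥0} |ψ(t)|, and let a > 0. For every n ≥ 1 and every x ∈ [0,a], |K_n^μ(ψ; x) − ψ(x)| ≤ (3/4)(2 + a + s²) w₂(ψ; s) + (2s²/a) ‖ψ‖, where s = (K_n^μ((ξ−x)²; x))^{1/4} and w₂ is the second-order modulus of continuity. -/

import Mathlib

open scoped BigOperators

/-- The Dunkl coefficients γ_μ(i). -/
noncomputable def gammaMu (μ : ℝ) (i : ℕ) : ℝ :=
  if Even i then
    2 ^ i * (Nat.factorial (i / 2)) *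
      Real.Gamma (((i / 2 : ℕ) : ℝ) + μ + 1 / 2) / Real.Gamma (μ + 1 / 2)
  else
    2 ^ i * (Nat.factorial (i / 2)) *
      Real.Gamma (((i / 2 : ℕ) : ℝ) + μ + 3 / 2) / Real.Gamma (μ + 1 / 2)

/-- θ_i = 0 if i is even, 1 if i is odd. -/
noncomputable def thetaFn (i : ℕ) : ℝ := if Even i then 0 else 1

/-- The Dunkl exponential e_μ(x) = Σ x^i / γ_μ(i). -/
noncomputable def dunklExp (μ : ℝ) (x : ℝ) : ℝ := ∑' i : ℕ, x ^ i / gammaMu μ i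

/-- The Dunkl operator (Λ_μ f)(x) = f'(x) + μ (f(x) - f(-x)) / x. -/
noncomputable def dunklOp (μ : ℝ) (f : ℝ → ℝ) (x : ℝ) : ℝ :=
  deriv f x + μ * (f x - f (-x)) / x

/-- Q(t) = Σ c_i t^i / γ_μ(i). -/
noncomputable def Qf (μ : ℝ) (c : ℕ → ℝ) (t : ℝ) : ℝ := ∑' i : ℕ, c i * t ^ i / gammaMu μ i

/-- The Dunkl–Appell polynomials q_i(x) = Σ_{j=0}^i (γ_μ(i)/(γ_μ(j)γ_μ(i-j))) c_{i-j} x^j. -/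
noncomputable def qPoly (μ : ℝ) (c : ℕ → ℝ) (i : ℕ) (x : ℝ) : ℝ :=
  ∑ j ∈ Finset.range (i + 1),
    gammaMu μ i / (gammaMu μ j * gammaMu μ (i - j)) * c (i - j) * x ^ j

/-- The operators K_n^μ(f;x). -/
noncomputable def Kop (μ : ℝ) (c : ℕ → ℝ) (n : ℕ) (f : ℝ → ℝ) (x : ℝ) : ℝ :=
  1 / (Qf μ c 1 * dunklExp μ (n * x)) *
    ∑' i : ℕ, qPoly μ c i (n * x) / gammaMu μ i * f (((i : ℝ) + 2 * μ * thetaFn i) / n)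

/-- The second-order modulus of continuity of ψ on [0,∞). -/
noncomputable def modulusOfContinuity2 (ψ : ℝ → ℝ) (δ : ℝ) : ℝ :=
  sSup {y : ℝ | ∃ t h : ℝ, 0 ≤ t ∧ 0 ≤ h ∧ h ≤ δ ∧ y = |ψ (t + 2 * h) - 2 * ψ (t + h) + ψ t|}

/-!
`K_n^μ(f; x) = ∑ wᵢ f(ξᵢ) / D` is a positive mean: the weights `wᵢ = q_i(nx)/γ_μ(i)` are
nonnegative and, by the Cauchy product `Q(1) e_μ(nx) = ∑ q_i(nx)/γ_μ(i)`, sum to `D`. It therefore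
suffices to majorize `|ψ(t) - ψ(x)|` by a quadratic in `t - x`.

Let `ω` bound the second differences of `ψ` with steps at most `h` and `Δ = ψ(z+h) - ψ(z)`.
Walking in steps of `h` and interpolating linearly on the last piece (a discrete maximum principle)
gives `|ψ(z+L) - ψ(z) - (L/h) Δ| ≤ (1 + (L/h)²/2) ω`, while comparing `ψ(z + mh) - ψ(z)` with `m Δ`
for `m = ⌈a/h⌉` gives `|Δ| ≤ 2Mh/a + aω/(2h)`. With `h = s`, `K((ξ-x)²) = s⁴` and, by AM-GM,
`K(|ξ-x|) ≤ s²`, which yields the bound `(1 + a/2 + s²/2) ω + 2s²M/a`.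
-/

open Finset Set

variable {μ : ℝ}

theorem gammaMu_pos (hμ : 0 ≤ μ) (i : ℕ) : 0 < gammaMu μ i := by
  have h₀ := Real.Gamma_pos_of_pos (by linarith : 0 < μ + 1 / 2)
  have h₁ := Real.Gamma_pos_of_pos (by positivity : 0 < ((i / 2 : ℕ) : ℝ) + μ + 1 / 2)
  have h₂ := Real.Gamma_pos_of_pos (by positivity : 0 < ((i / 2 : ℕ) : ℝ) + μ + 3 / 2)
  unfold gammaMu
  split_ifs <;> positivity

theorem gammaMu_zero (hμ : 0 ≤ μ) : gammaMu μ 0 = 1 := by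
  simp [gammaMu, (Real.Gamma_pos_of_pos (by linarith : (0 : ℝ) < μ + 2⁻¹)).ne']

theorem mul_gammaMu_le_gammaMu_succ (hμ : 0 ≤ μ) (i : ℕ) :
    ((i : ℝ) + 1) * gammaMu μ i ≤ gammaMu μ (i + 1) := by
  have hΓ₀ : 0 < Real.Gamma (μ + 1 / 2) := Real.Gamma_pos_of_pos (by linarith)
  -- `γ(2k+1) = 2 (k + μ + 1/2) γ(2k)` and `γ(2k+2) = 2 (k + 1) γ(2k+1)`
  obtain ⟨k, rfl | rfl⟩ := Nat.even_or_odd' i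
  · have hΓ : 0 < Real.Gamma ((k : ℝ) + μ + 1 / 2) := Real.Gamma_pos_of_pos (by positivity)
    have hrec : Real.Gamma ((k : ℝ) + μ + 3 / 2) =
        ((k : ℝ) + μ + 1 / 2) * Real.Gamma ((k : ℝ) + μ + 1 / 2) := by
      rw [← Real.Gamma_add_one (by positivity)]; ring_nf
    have hodd : ¬ Even (2 * k + 1) := by simp
    simp only [gammaMu, even_two_mul, hodd, if_true, if_false,
      show 2 * k / 2 = k by omega, show (2 * k + 1) / 2 = k by omega, hrec]
    rw [← mul_div_assoc, div_le_div_iff_of_pos_right hΓ₀]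
    have : (0 : ℝ) ≤ 2 ^ (2 * k) * k.factorial * Real.Gamma ((k : ℝ) + μ + 1 / 2) * μ := by
      positivity
    push_cast [pow_succ]
    nlinarith
  · have hodd : ¬ Even (2 * k + 1) := by simp
    have heven : Even (2 * k + 1 + 1) := ⟨k + 1, by ring⟩
    simp only [gammaMu, hodd, heven, if_true, if_false,
      show (2 * k + 1) / 2 = k by omega, show (2 * k + 1 + 1) / 2 = k + 1 by omega]
    apply le_of_eq
    push_cast [Nat.factorial_succ, pow_succ]
    ring_nf

theorem factorial_le_gammaMu (hμ : 0 ≤ μ) (i : ℕ) : (i.factorial : ℝ) ≤ gammaMu μ i := by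
  induction i with
  | zero => simp [gammaMu_zero hμ]
  | succ i ih =>
    calc ((i + 1).factorial : ℝ) = ((i : ℝ) + 1) * i.factorial := by
          push_cast [Nat.factorial_succ]; ring
      _ ≤ ((i : ℝ) + 1) * gammaMu μ i := by gcongr
      _ ≤ gammaMu μ (i + 1) := mul_gammaMu_le_gammaMu_succ hμ i

theorem summable_norm_pow_div_gammaMu (hμ : 0 ≤ μ) {y : ℝ} (hy : 0 ≤ y) :
    Summable fun i => ‖y ^ i / gammaMu μ i‖ := by
  refine (Real.summable_pow_div_factorial y).of_nonneg_of_le (fun _ => norm_nonneg _) fun i => ?_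
  have := gammaMu_pos hμ i
  rw [Real.norm_of_nonneg (by positivity)]
  gcongr
  exact factorial_le_gammaMu hμ i

theorem one_le_dunklExp (hμ : 0 ≤ μ) {y : ℝ} (hy : 0 ≤ y) : 1 ≤ dunklExp μ y := by
  have h := (summable_norm_pow_div_gammaMu hμ hy).of_norm.le_tsum 0
    fun i _ => div_nonneg (pow_nonneg hy i) (gammaMu_pos hμ i).le
  rwa [pow_zero, gammaMu_zero hμ, div_one] at h

theorem hasSum_qPoly_div_gammaMu (hμ : 0 ≤ μ) {c : ℕ → ℝ}
    (hQ : Summable fun i => |c i * 1 ^ i / gammaMu μ i|) {y : ℝ} (hy : 0 ≤ y) :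
    HasSum (fun i => qPoly μ c i y / gammaMu μ i) (Qf μ c 1 * dunklExp μ y) := by
  have hc : Summable fun i => ‖c i / gammaMu μ i‖ := by
    simpa only [one_pow, mul_one, Real.norm_eq_abs] using hQ
  have h := hasSum_sum_range_mul_of_summable_norm (summable_norm_pow_div_gammaMu hμ hy) hc
  have hterm : (fun i => qPoly μ c i y / gammaMu μ i) =
      fun i => ∑ j ∈ range (i + 1), y ^ j / gammaMu μ j * (c (i - j) / gammaMu μ (i - j)) := by
    ext i
    simp only [qPoly, sum_div]
    refine sum_congr rfl fun j _ => ?_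
    have := gammaMu_pos hμ i; have := gammaMu_pos hμ j; have := gammaMu_pos hμ (i - j)
    field_simp
  simpa only [hterm, Qf, dunklExp, one_pow, mul_one, mul_comm] using h

def SecondDiffLE (ψ : ℝ → ℝ) (h ω : ℝ) : Prop :=
  ∀ τ g : ℝ, 0 ≤ τ → 0 ≤ g → g ≤ h → |ψ (τ + 2 * g) - 2 * ψ (τ + g) + ψ τ| ≤ ω

theorem abs_le_of_abs_secondDiff_le {e : ℝ → ℝ} {h ω : ℝ} (hbdd : BddAbove ((|e ·|) '' Icc 0 h))
    (he0 : e 0 = 0) (heh : e h = 0)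
    (hω : ∀ v g, 0 ≤ v → 0 ≤ g → v + 2 * g ≤ h → |e (v + 2 * g) - 2 * e (v + g) + e v| ≤ ω)
    {v : ℝ} (hv : v ∈ Icc 0 h) : |e v| ≤ ω := by
  set S := sSup ((|e ·|) '' Icc 0 h)
  have hle : ∀ u ∈ Icc 0 h, |e u| ≤ S := fun u hu => le_csSup hbdd (mem_image_of_mem _ hu)
  -- `2 e(u)` is a value of `e` on `[0, h]` minus a second difference, so `|e| ≤ (S + ω) / 2`.
  have hhalf : ∀ u ∈ Icc 0 h, |e u| ≤ (S + ω) / 2 := by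
    rintro u ⟨hu0, huh⟩
    obtain ⟨w, hw, d, hd, hu⟩ : ∃ w ∈ Icc 0 h, ∃ d, |d| ≤ ω ∧ 2 * e u = e w - d := by
      rcases le_total (2 * u) h with hu | hu
      · refine ⟨2 * u, ⟨by linarith, hu⟩, _, hω 0 u le_rfl hu0 (by linarith), ?_⟩
        simp only [zero_add, he0]; ring
      · refine ⟨2 * u - h, ⟨by linarith, by linarith⟩, _,
          hω (2 * u - h) (h - u) (by linarith) (by linarith) (by linarith), ?_⟩
        rw [show 2 * u - h + 2 * (h - u) = h by ring, show 2 * u - h + (h - u) = u by ring, heh]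
        ring
    have := hle w hw
    have := abs_sub (e w) d
    rw [← hu, abs_mul, abs_two] at this
    linarith
  have hS : S ≤ (S + ω) / 2 :=
    csSup_le (Set.Nonempty.image _ ⟨v, hv⟩) (by rintro _ ⟨u, hu, rfl⟩; exact hhalf u hu)
  linarith [hle v hv]

namespace SecondDiffLE

variable {ψ : ℝ → ℝ} {h ω M z : ℝ}

theorem nonneg (hω : SecondDiffLE ψ h ω) (hh : 0 ≤ h) : 0 ≤ ω :=
  (abs_nonneg _).trans (hω 0 0 le_rfl le_rfl hh)

theorem abs_forwardDiff_sub_le (hω : SecondDiffLE ψ h ω) (hh : 0 ≤ h) (hz : 0 ≤ z) (k : ℕ) :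
    |(ψ (z + k * h + h) - ψ (z + k * h)) - (ψ (z + h) - ψ z)| ≤ k * ω := by
  induction k with
  | zero => simp
  | succ k ih =>
    calc |_| = |(ψ (z + k * h + 2 * h) - 2 * ψ (z + k * h + h) + ψ (z + k * h)) +
          ((ψ (z + k * h + h) - ψ (z + k * h)) - (ψ (z + h) - ψ z))| := by
          congr 1; push_cast; ring_nf
      _ ≤ ω + k * ω := (abs_add_le _ _).trans (add_le_add (hω _ h (by positivity) hh le_rfl) ih)
      _ = (k + 1 : ℕ) * ω := by push_cast; ring

theorem abs_mul_forwardDiff_sub_le (hω : SecondDiffLE ψ h ω) (hh : 0 ≤ h) (hz : 0 ≤ z) (m : ℕ) :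
    |m * (ψ (z + h) - ψ z) - (ψ (z + m * h) - ψ z)| ≤ m * (m - 1) / 2 * ω := by
  induction m with
  | zero => simp
  | succ m ih =>
    calc |_| = |(m * (ψ (z + h) - ψ z) - (ψ (z + m * h) - ψ z)) -
          ((ψ (z + m * h + h) - ψ (z + m * h)) - (ψ (z + h) - ψ z))| := by
          congr 1; push_cast; ring_nf
      _ ≤ m * (m - 1) / 2 * ω + m * ω :=
          (abs_sub _ _).trans (add_le_add ih (hω.abs_forwardDiff_sub_le hh hz m))
      _ = (m + 1 : ℕ) * ((m + 1 : ℕ) - 1) / 2 * ω := by push_cast; ring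

/-- The step `m = ⌈a / h⌉` balances the bound `m |Δ| ≤ 2 M + m (m - 1) ω / 2`. -/
theorem abs_forwardDiff_le (hω : SecondDiffLE ψ h ω) (hM : ∀ t, 0 ≤ t → |ψ t| ≤ M) {a : ℝ}
    (ha : 0 < a) (hh : 0 < h) (hz : 0 ≤ z) :
    |ψ (z + h) - ψ z| ≤ 2 * M * h / a + a / (2 * h) * ω := by
  set m := ⌈a / h⌉₊
  have hm : a / h ≤ m := Nat.le_ceil _
  have hm' : (m : ℝ) - 1 ≤ a / h := by linarith [Nat.ceil_lt_add_one (div_pos ha hh).le]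
  have hmpos : (0 : ℝ) < m := (div_pos ha hh).trans_le hm
  have hmh : a ≤ m * h := by rwa [div_le_iff₀ hh] at hm
  have hM0 : 0 ≤ M := (abs_nonneg _).trans (hM z hz)
  have hω0 := hω.nonneg hh.le
  have hfar : |ψ (z + m * h) - ψ z| ≤ 2 * M :=
    (abs_sub _ _).trans (by linarith [hM (z + m * h) (by positivity), hM z hz])
  have key : m * |ψ (z + h) - ψ z| ≤ 2 * M + m * (m - 1) / 2 * ω := by
    have := (abs_sub_abs_le_abs_sub (m * (ψ (z + h) - ψ z)) (ψ (z + m * h) - ψ z)).trans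
      (hω.abs_mul_forwardDiff_sub_le hh.le hz m)
    rw [abs_mul, abs_of_pos hmpos] at this
    linarith
  have hMa : 2 * M ≤ 2 * M * (m * h) / a := by rw [le_div_iff₀ ha]; nlinarith
  have hωa : m * (m - 1) / 2 * ω ≤ m * (a / h / 2 * ω) := by
    have := mul_le_mul_of_nonneg_right hm' hω0; nlinarith
  refine le_of_mul_le_mul_left (key.trans ?_) hmpos
  calc 2 * M + m * (m - 1) / 2 * ω ≤ 2 * M * (m * h) / a + m * (a / h / 2 * ω) := by linarith
    _ = m * (2 * M * h / a + a / (2 * h) * ω) := by field_simp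

theorem abs_sub_linearInterp_le (hω : SecondDiffLE ψ h ω) (hM : ∀ t, 0 ≤ t → |ψ t| ≤ M)
    (hh : 0 < h) (hz : 0 ≤ z) {r : ℝ} (hr : r ∈ Icc 0 h) :
    |ψ (z + r) - ψ z - r / h * (ψ (z + h) - ψ z)| ≤ ω := by
  set e := fun v => ψ (z + v) - ψ z - v / h * (ψ (z + h) - ψ z)
  refine abs_le_of_abs_secondDiff_le (e := e) ?_ (by simp [e]) (by simp [e, hh.ne']) ?_ hr
  · refine ⟨M + M + |ψ (z + h) - ψ z|, ?_⟩
    rintro _ ⟨v, ⟨hv0, hvh⟩, rfl⟩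
    have hvh' : |v / h| ≤ 1 := by
      rw [abs_of_nonneg (by positivity)]; exact div_le_one_of_le₀ hvh hh.le
    calc |e v| ≤ |ψ (z + v)| + |ψ z| + |v / h| * |ψ (z + h) - ψ z| := by
          rw [← abs_mul]; exact (abs_sub _ _).trans (by gcongr; exact abs_sub _ _)
      _ ≤ M + M + 1 * |ψ (z + h) - ψ z| := by
          gcongr
          exacts [hM _ (by positivity), hM z hz]
      _ = M + M + |ψ (z + h) - ψ z| := by ring
  · intro v g hv hg hvg
    have : e (v + 2 * g) - 2 * e (v + g) + e v =
        ψ (z + v + 2 * g) - 2 * ψ (z + v + g) + ψ (z + v) := by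
      simp only [e]; ring_nf
    rw [this]
    exact hω (z + v) g (by positivity) hg (by linarith)

theorem abs_sub_sub_mul_forwardDiff_le (hω : SecondDiffLE ψ h ω) (hM : ∀ t, 0 ≤ t → |ψ t| ≤ M)
    (hh : 0 < h) (hz : 0 ≤ z) {L : ℝ} (hL : 0 ≤ L) :
    |ψ (z + L) - ψ z - L / h * (ψ (z + h) - ψ z)| ≤ (1 + (L / h) ^ 2 / 2) * ω := by
  set K := ⌊L / h⌋₊
  set r := L - K * h
  have hKh : K * h ≤ L := by rw [← le_div_iff₀ hh]; exact Nat.floor_le (by positivity)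
  have hrh : r ≤ h := by
    have := Nat.lt_floor_add_one (L / h); rw [div_lt_iff₀ hh] at this; simp only [r]; linarith
  have hLh : L / h = K + r / h := by field_simp; simp only [r]; ring
  have hω0 := hω.nonneg hh.le
  -- Walk `K` steps of length `h`, then interpolate linearly on the last piece of length `r`.
  have hK := hω.abs_mul_forwardDiff_sub_le hh.le hz K
  have hr := hω.abs_sub_linearInterp_le hM hh (z := z + K * h) (by positivity)
    ⟨sub_nonneg.mpr hKh, hrh⟩
  have hdrift := hω.abs_forwardDiff_sub_le hh.le hz K
  have hrh0 : 0 ≤ r / h := div_nonneg (sub_nonneg.mpr hKh) hh.le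
  calc |ψ (z + L) - ψ z - L / h * (ψ (z + h) - ψ z)|
      = |-(K * (ψ (z + h) - ψ z) - (ψ (z + K * h) - ψ z)) +
          (ψ (z + K * h + r) - ψ (z + K * h) - r / h * (ψ (z + K * h + h) - ψ (z + K * h))) +
          r / h * ((ψ (z + K * h + h) - ψ (z + K * h)) - (ψ (z + h) - ψ z))| := by
        rw [hLh, show z + L = z + K * h + r by simp only [r]; ring]; ring_nf
    _ ≤ K * (K - 1) / 2 * ω + ω + r / h * (K * ω) := by
        refine (abs_add_le _ _).trans (add_le_add ((abs_add_le _ _).trans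
          (add_le_add (by rwa [abs_neg]) hr)) ?_)
        rw [abs_mul, abs_of_nonneg hrh0]
        exact mul_le_mul_of_nonneg_left hdrift hrh0
    _ ≤ (1 + (L / h) ^ 2 / 2) * ω := by
        rw [hLh]; nlinarith [mul_nonneg (mul_nonneg hrh0 hrh0) hω0, mul_nonneg hrh0 hω0]

theorem abs_sub_le (hω : SecondDiffLE ψ h ω) (hM : ∀ t, 0 ≤ t → |ψ t| ≤ M) {a : ℝ}
    (ha : 0 < a) (hh : 0 < h) {t x : ℝ} (ht : 0 ≤ t) (hx : 0 ≤ x) :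
    |ψ t - ψ x| ≤
      ω + (2 * M / a + a / (2 * h ^ 2) * ω) * |t - x| + ω / (2 * h ^ 2) * (t - x) ^ 2 := by
  wlog hxt : x ≤ t generalizing t x
  · rw [abs_sub_comm, abs_sub_comm t, ← neg_sub x t, neg_sq]
    exact this hx ht (le_of_not_ge hxt)
  obtain ⟨L, hL, rfl⟩ : ∃ L, 0 ≤ L ∧ t = x + L := ⟨t - x, by linarith, by ring⟩
  have hω0 := hω.nonneg hh.le
  calc |ψ (x + L) - ψ x|
      ≤ |ψ (x + L) - ψ x - L / h * (ψ (x + h) - ψ x)| + L / h * |ψ (x + h) - ψ x| := by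
        have := abs_sub_abs_le_abs_sub (ψ (x + L) - ψ x) (L / h * (ψ (x + h) - ψ x))
        rw [abs_mul, abs_of_nonneg (div_nonneg hL hh.le)] at this
        linarith
    _ ≤ (1 + (L / h) ^ 2 / 2) * ω + L / h * (2 * M * h / a + a / (2 * h) * ω) := by
        gcongr
        exacts [hω.abs_sub_sub_mul_forwardDiff_le hM hh hx hL, hω.abs_forwardDiff_le hM ha hh hx]
    _ = _ := by rw [add_sub_cancel_left, abs_of_nonneg hL]; field_simp; ring

end SecondDiffLE

theorem secondDiffLE_modulusOfContinuity2 {ψ : ℝ → ℝ} {M : ℝ} (hM : ∀ t, 0 ≤ t → |ψ t| ≤ M)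
    (δ : ℝ) : SecondDiffLE ψ δ (modulusOfContinuity2 ψ δ) := by
  intro τ g hτ hg hgδ
  refine le_csSup ⟨4 * M, ?_⟩ ⟨τ, g, hτ, hg, hgδ, rfl⟩
  rintro _ ⟨t, g, ht, hg, -, rfl⟩
  have h₂ := abs_le.mp (hM (t + 2 * g) (by positivity))
  have h₁ := abs_le.mp (hM (t + g) (by positivity))
  have h₀ := abs_le.mp (hM t ht)
  exact abs_le.mpr ⟨by linarith, by linarith⟩

/-- `D` stands for the total mass `∑ w i`; keeping it a parameter makes `Kop μ c n f x` an instance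
by definition. -/
noncomputable def weightedMean (w : ℕ → ℝ) (D : ℝ) (ξ : ℕ → ℝ) (f : ℝ → ℝ) : ℝ :=
  1 / D * ∑' i, w i * f (ξ i)

section WeightedMean

variable {w ξ : ℕ → ℝ} {D x : ℝ}

theorem weightedMean_nonneg {f : ℝ → ℝ} (hw : ∀ i, 0 ≤ w i) (hD : 0 ≤ D)
    (hf : ∀ i, 0 ≤ f (ξ i)) : 0 ≤ weightedMean w D ξ f :=
  mul_nonneg (by positivity) (tsum_nonneg fun i => mul_nonneg (hw i) (hf i) :
    (0 : ℝ) ≤ ∑' i, w i * f (ξ i))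

theorem weightedMean_eq_of_moment_eq_zero {f : ℝ → ℝ} (hw : ∀ i, 0 ≤ w i) (hD : HasSum w D)
    (hD0 : D ≠ 0) (hm : Summable fun i => w i * (ξ i - x) ^ 2)
    (h0 : weightedMean w D ξ (fun t => (t - x) ^ 2) = 0) : weightedMean w D ξ f = f x := by
  have hterm_nonneg (i : ℕ) : 0 ≤ w i * (ξ i - x) ^ 2 := mul_nonneg (hw i) (sq_nonneg _)
  have htsum : ∑' i, w i * (ξ i - x) ^ 2 = 0 := by simpa [weightedMean, hD0] using h0
  have hnode (i : ℕ) : w i * f (ξ i) = w i * f x := by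
    have hzero : w i * (ξ i - x) ^ 2 = 0 :=
      le_antisymm (htsum ▸ hm.le_tsum i fun j _ => hterm_nonneg j) (hterm_nonneg i)
    rcases mul_eq_zero.mp hzero with h | h
    · simp [h]
    · rw [sub_eq_zero.mp (pow_eq_zero_iff two_ne_zero |>.mp h)]
  rw [weightedMean, tsum_congr hnode, tsum_mul_right, hD.tsum_eq]
  field_simp

theorem abs_weightedMean_sub_le {f : ℝ → ℝ} {A C : ℝ} (hw : ∀ i, 0 ≤ w i) (hD : HasSum w D)
    (hD0 : 0 < D) (hf : Summable fun i => w i * f (ξ i))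
    (hm : Summable fun i => w i * (ξ i - x) ^ 2)
    (hfx : ∀ i, |f (ξ i) - f x| ≤ A + C * (ξ i - x) ^ 2) :
    |weightedMean w D ξ f - f x| ≤ A + C * weightedMean w D ξ (fun t => (t - x) ^ 2) := by
  have hmaj := (hD.mul_right A).add (hm.hasSum.mul_left C)
  have hdiff := hf.hasSum.sub (hD.mul_right (f x))
  have hterm (i : ℕ) : |w i * f (ξ i) - w i * f x| ≤ w i * A + C * (w i * (ξ i - x) ^ 2) := by
    calc |w i * f (ξ i) - w i * f x| = w i * |f (ξ i) - f x| := by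
          rw [← mul_sub, abs_mul, abs_of_nonneg (hw i)]
      _ ≤ w i * (A + C * (ξ i - x) ^ 2) := mul_le_mul_of_nonneg_left (hfx i) (hw i)
      _ = w i * A + C * (w i * (ξ i - x) ^ 2) := by ring
  have hsum : |∑' i, w i * f (ξ i) - D * f x| ≤ D * A + C * ∑' i, w i * (ξ i - x) ^ 2 :=
    abs_le.mpr ⟨hasSum_le (fun i => (neg_le_neg (hterm i)).trans (neg_abs_le _)) hmaj.neg hdiff,
      hasSum_le (fun i => (le_abs_self _).trans (hterm i)) hdiff hmaj⟩
  have hmean : weightedMean w D ξ f - f x = (∑' i, w i * f (ξ i) - D * f x) / D := by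
    unfold weightedMean; field_simp
  rw [hmean, abs_div, abs_of_pos hD0, div_le_iff₀ hD0]
  calc _ ≤ D * A + C * ∑' i, w i * (ξ i - x) ^ 2 := hsum
    _ = _ := by unfold weightedMean; field_simp

theorem abs_weightedMean_sub_le_modulusOfContinuity2 {ψ : ℝ → ℝ} {M a : ℝ} (hw : ∀ i, 0 ≤ w i)
    (hD : HasSum w D) (hD0 : 0 < D) (hξ : ∀ i, 0 ≤ ξ i) (hx : 0 ≤ x)
    (hM : ∀ t, 0 ≤ t → |ψ t| ≤ M) (ha : 0 < a) (hψ : Summable fun i => w i * ψ (ξ i))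
    (hm : Summable fun i => w i * (ξ i - x) ^ 2) :
    let s := weightedMean w D ξ (fun t => (t - x) ^ 2) ^ ((1 : ℝ) / 4)
    |weightedMean w D ξ ψ - ψ x| ≤
      3 / 4 * (2 + a + s ^ 2) * modulusOfContinuity2 ψ s + 2 * s ^ 2 / a * M := by
  intro s
  set m := weightedMean w D ξ (fun t => (t - x) ^ 2)
  have hm0 : 0 ≤ m := weightedMean_nonneg hw hD0.le fun i => sq_nonneg _
  have hs4 : s ^ 2 * s ^ 2 = m := by
    rw [← pow_add, ← Real.rpow_natCast, ← Real.rpow_mul hm0]; norm_num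
  have hω := secondDiffLE_modulusOfContinuity2 hM s
  set ω := modulusOfContinuity2 ψ s
  have hω0 : 0 ≤ ω := hω.nonneg (by positivity)
  have hM0 : 0 ≤ M := (abs_nonneg _).trans (hM 0 le_rfl)
  rcases hm0.eq_or_lt with hm0 | hmpos
  · rw [weightedMean_eq_of_moment_eq_zero hw hD hD0.ne' hm hm0.symm, sub_self, abs_zero]
    positivity
  have hs : 0 < s := by positivity
  set L := 2 * M / a + a / (2 * s ^ 2) * ω
  have hquad : ∀ i,
      |ψ (ξ i) - ψ x| ≤ (ω + L * s ^ 2 / 2) + (L + ω) / (2 * s ^ 2) * (ξ i - x) ^ 2 := by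
    intro i
    -- AM-GM at the scale `s²`, the mean of `|ξ - x|` being at most `√m = s²`
    have hamgm : |ξ i - x| ≤ s ^ 2 / 2 + (ξ i - x) ^ 2 / (2 * s ^ 2) := by
      rw [div_add_div _ _ two_ne_zero (by positivity), le_div_iff₀ (by positivity)]
      nlinarith [sq_nonneg (|ξ i - x| - s ^ 2), sq_abs (ξ i - x)]
    calc |ψ (ξ i) - ψ x| ≤ ω + L * |ξ i - x| + ω / (2 * s ^ 2) * (ξ i - x) ^ 2 :=
          hω.abs_sub_le hM ha hs (hξ i) hx
      _ ≤ ω + L * (s ^ 2 / 2 + (ξ i - x) ^ 2 / (2 * s ^ 2)) + ω / (2 * s ^ 2) * (ξ i - x) ^ 2 := by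
          gcongr
      _ = _ := by ring
  calc |weightedMean w D ξ ψ - ψ x| ≤ (ω + L * s ^ 2 / 2) + (L + ω) / (2 * s ^ 2) * m :=
        abs_weightedMean_sub_le hw hD hD0 hψ hm hquad
    _ = (1 + a / 2 + s ^ 2 / 2) * ω + 2 * s ^ 2 / a * M := by
        rw [← hs4]; simp only [L]; field_simp; ring
    _ ≤ _ := by nlinarith [mul_nonneg ha.le hω0, mul_nonneg (sq_nonneg s) hω0]

end WeightedMean

theorem Kop_rate_second_modulus_general (μ : ℝ) (hμ : 0 ≤ μ) (c : ℕ → ℝ)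
    (hQ : ∀ t : ℝ, Summable fun i : ℕ => |c i * t ^ i / gammaMu μ i|)
    (hq : ∀ i : ℕ, ∀ x : ℝ, 0 ≤ x → 0 ≤ qPoly μ c i x)
    (hQ1 : 0 < Qf μ c 1)
    (n : ℕ)
    (ψ : ℝ → ℝ)
    (Mψ : ℝ) (hMψ : IsLUB {y : ℝ | ∃ t : ℝ, 0 ≤ t ∧ y = |ψ t|} Mψ)
    (a : ℝ) (ha : 0 < a) (x : ℝ) (hx : x ∈ Set.Icc 0 a)
    (hψs : Summable fun i : ℕ =>
      |qPoly μ c i (n * x) / gammaMu μ i * ψ (((i : ℝ) + 2 * μ * thetaFn i) / n)|)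
    (h2 : Summable fun i : ℕ =>
      |qPoly μ c i (n * x) / gammaMu μ i * ((((i : ℝ) + 2 * μ * thetaFn i) / n - x) ^ 2)|) :
    |Kop μ c n ψ x - ψ x| ≤
      3 / 4 * (2 + a + ((Kop μ c n (fun ξ => (ξ - x) ^ 2) x) ^ ((1 : ℝ) / 4)) ^ 2) *
          modulusOfContinuity2 ψ ((Kop μ c n (fun ξ => (ξ - x) ^ 2) x) ^ ((1 : ℝ) / 4)) +
        2 * ((Kop μ c n (fun ξ => (ξ - x) ^ 2) x) ^ ((1 : ℝ) / 4)) ^ 2 / a * Mψ := by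
  have hnx : 0 ≤ (n : ℝ) * x := mul_nonneg n.cast_nonneg hx.1
  have hθ (i : ℕ) : 0 ≤ thetaFn i := by unfold thetaFn; split_ifs <;> norm_num
  exact abs_weightedMean_sub_le_modulusOfContinuity2
    (fun i => div_nonneg (hq i _ hnx) (gammaMu_pos hμ i).le)
    (hasSum_qPoly_div_gammaMu hμ (hQ 1) hnx)
    (mul_pos hQ1 (zero_lt_one.trans_le (one_le_dunklExp hμ hnx)))
    (fun i => div_nonneg (by have := hθ i; positivity) n.cast_nonneg)
    hx.1 (fun t ht => hMψ.1 ⟨t, ht, rfl⟩) ha hψs.of_abs h2.of_abs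

/-- estimate via the second-order modulus of continuity. -/
theorem Kop_rate_second_modulus (μ : ℝ) (hμ : 0 ≤ μ) (c : ℕ → ℝ) (hc0 : c 0 ≠ 0)
    (hQ : ∀ t : ℝ, Summable fun i : ℕ => |c i * t ^ i / gammaMu μ i|)
    (hq : ∀ i : ℕ, ∀ x : ℝ, 0 ≤ x → 0 ≤ qPoly μ c i x)
    (hQ1 : 0 < Qf μ c 1)
    (n : ℕ) (hn : 1 ≤ n)
    (ψ : ℝ → ℝ) (hψ : ContinuousOn ψ (Set.Ici 0))
    (Mψ : ℝ) (hMψ : IsLUB {y : ℝ | ∃ t : ℝ, 0 ≤ t ∧ y = |ψ t|} Mψ)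
    (a : ℝ) (ha : 0 < a) (x : ℝ) (hx : x ∈ Set.Icc 0 a)
    (hψs : Summable fun i : ℕ =>
      |qPoly μ c i (n * x) / gammaMu μ i * ψ (((i : ℝ) + 2 * μ * thetaFn i) / n)|)
    (h2 : Summable fun i : ℕ =>
      |qPoly μ c i (n * x) / gammaMu μ i * ((((i : ℝ) + 2 * μ * thetaFn i) / n - x) ^ 2)|) :
    |Kop μ c n ψ x - ψ x| ≤
      3 / 4 * (2 + a + ((Kop μ c n (fun ξ => (ξ - x) ^ 2) x) ^ ((1 : ℝ) / 4)) ^ 2) *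
          modulusOfContinuity2 ψ ((Kop μ c n (fun ξ => (ξ - x) ^ 2) x) ^ ((1 : ℝ) / 4)) +
        2 * ((Kop μ c n (fun ξ => (ξ - x) ^ 2) x) ^ ((1 : ℝ) / 4)) ^ 2 / a * Mψ :=
  Kop_rate_second_modulus_general μ hμ c hQ hq hQ1 n ψ Mψ hMψ a ha x hx hψs h2
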